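/- arXiv:2505.20017 — 2 statements merged into one kernel-verified Lean document; each statement's English description precedes it below -/
import Mathlib

section
/- Let p ≥ 1, B > 0, t ≥ 1. Let X_1,…,X_t ∈ ℝ^p satisfy ‖X_s‖₂ ≤ 1 and let Y_1,…,Y_t ∈ ℝ be arbitrary. Let Q₁ be the uniform probability measure on the closed Euclidean ball B(B+1) = {θ ∈ ℝ^p : ‖θ‖₂ ≤ B+1}. Then for every θ̄ ∈ ℝ^p with ‖θ̄‖₂ ≤ B, the quantity −log ∫ exp(−∑_{s=1}^t (ℓ_s(θ) − ℓ_s(θ̄))) dQ₁(θ) — which equals the regret Regret_t(θ̄) = ∑_{s=1}^t 𝓛_s(Q_s) − ∑_{s=1}^t ℓ_s(θ̄) of the exponential weighted average (EWA) forecaster with prior Q₁ — is at most (p/2)·log((B+1)²·e·max(p,t)/p). -/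
/-!
Around the comparator `θ̄` the cumulative loss difference at `θ̄ + u` is a quadratic form in `u`
plus a linear one. Averaging the integrand over `θ̄ + u` and `θ̄ - u` cancels the linear part
(`cosh ≥ 1`), and for `‖u‖ ≤ δ = √(p / max p t)` the quadratic part is at most `t δ² / 2 ≤ p / 2`.
Hence the integral over the ball of radius `δ` around `θ̄`, which lies in the prior's support and
carries the fraction `(δ / (B + 1)) ^ p` of its mass, is at least that fraction times `exp (-p/2)`;
taking `-log` gives `p log ((B + 1) / δ) + p / 2`, which is the bound.
-/

open MeasureTheory Metric Finset
open scoped RealInnerProductSpace ENNReal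

theorem mul_le_setIntegral_closedBall_of_le_add_comp_sub {E : Type*} [NormedAddCommGroup E]
    [MeasurableSpace E] [BorelSpace E] [ProperSpace E] (μ : Measure E) [μ.IsAddLeftInvariant]
    [μ.IsNegInvariant] [IsFiniteMeasureOnCompacts μ] {f : E → ℝ} (hf : Continuous f)
    {a : E} {r c : ℝ} (h : ∀ u ∈ closedBall (0 : E) r, 2 * c ≤ f (a + u) + f (a - u)) :
    μ.real (closedBall 0 r) * c ≤ ∫ θ in closedBall a r, f θ ∂μ := by
  have hint : ∀ g : E → E, Continuous g → IntegrableOn (fun u => f (g u)) (closedBall 0 r) μ :=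
    fun g hg => (hf.comp hg).continuousOn.integrableOn_compact (isCompact_closedBall _ _)
  have htrans : ∫ θ in closedBall a r, f θ ∂μ = ∫ u in closedBall 0 r, f (a + u) ∂μ := by
    rw [← (measurePreserving_add_left μ a).setIntegral_preimage_emb
      (MeasurableEquiv.addLeft a).measurableEmbedding, preimage_add_closedBall, sub_self]
  have hrefl : ∫ u in closedBall 0 r, f (a - u) ∂μ = ∫ u in closedBall 0 r, f (a + u) ∂μ := by
    rw [← (Measure.measurePreserving_neg μ).setIntegral_preimage_emb
      (MeasurableEquiv.neg E).measurableEmbedding, Set.neg_preimage, neg_closedBall, neg_zero]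
    simp only [sub_neg_eq_add]
  calc μ.real (closedBall 0 r) * c = (∫ _ in closedBall 0 r, 2 * c ∂μ) / 2 := by
        rw [setIntegral_const, smul_eq_mul]; ring
    _ ≤ (∫ u in closedBall 0 r, (f (a + u) + f (a - u)) ∂μ) / 2 := by
        refine div_le_div_of_nonneg_right ?_ zero_le_two
        exact setIntegral_mono_on (integrableOn_const measure_closedBall_lt_top.ne)
          ((hint _ (by fun_prop)).add (hint _ (by fun_prop))) measurableSet_closedBall h
    _ = ∫ θ in closedBall a r, f θ ∂μ := by
        rw [integral_add (hint _ (by fun_prop)) (hint _ (by fun_prop)), hrefl, htrans]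
        ring

section UniformBall

variable {E : Type*} [NormedAddCommGroup E] [NormedSpace ℝ E] [FiniteDimensional ℝ E]
  [MeasurableSpace E] [BorelSpace E] (μ : Measure E) [μ.IsAddHaarMeasure]

theorem addHaar_real_closedBall_div {r R : ℝ} (hr : 0 ≤ r) (hR : 0 < R) :
    μ.real (closedBall (0 : E) r) / μ.real (closedBall 0 R) = (r / R) ^ Module.finrank ℝ E := by
  have h1 : 0 < μ.real (closedBall (0 : E) 1) :=
    ENNReal.toReal_pos (measure_closedBall_pos μ 0 one_pos).ne' measure_closedBall_lt_top.ne
  rw [Measure.addHaar_real_closedBall' μ 0 hr, Measure.addHaar_real_closedBall' μ 0 hR.le, div_pow]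
  field_simp

theorem mul_le_integral_uniform_closedBall {f : E → ℝ} (hf : Continuous f) (hf0 : 0 ≤ f)
    {a : E} {δ R c : ℝ} (hδ : 0 ≤ δ) (hR : 0 < R) (hsub : closedBall a δ ⊆ closedBall 0 R)
    (h : ∀ u ∈ closedBall (0 : E) δ, 2 * c ≤ f (a + u) + f (a - u)) :
    (δ / R) ^ Module.finrank ℝ E * c ≤
      ∫ θ, f θ ∂((μ (closedBall 0 R))⁻¹ • μ.restrict (closedBall 0 R)) := by
  have hvol : 0 < μ.real (closedBall (0 : E) R) :=
    ENNReal.toReal_pos (measure_closedBall_pos μ 0 hR).ne' measure_closedBall_lt_top.ne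
  rw [integral_smul_measure, ENNReal.toReal_inv, smul_eq_mul, ← measureReal_def,
    ← addHaar_real_closedBall_div μ hδ hR, div_mul_eq_mul_div, div_eq_inv_mul]
  gcongr
  calc _ ≤ ∫ θ in closedBall a δ, f θ ∂μ :=
        mul_le_setIntegral_closedBall_of_le_add_comp_sub μ hf h
    _ ≤ _ := setIntegral_mono_set (hf.continuousOn.integrableOn_compact (isCompact_closedBall _ _))
      (.of_forall hf0) hsub.eventuallyLE

end UniformBall

theorem two_mul_exp_neg_le_exp_add_exp (q L : ℝ) :
    2 * Real.exp (-q) ≤ Real.exp (-(q + L)) + Real.exp (-(q - L)) := by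
  have h : 2 ≤ Real.exp (-L) + Real.exp L := by
    linarith [Real.add_one_le_exp (-L), Real.add_one_le_exp L]
  calc 2 * Real.exp (-q) ≤ Real.exp (-q) * (Real.exp (-L) + Real.exp L) := by
        nlinarith [Real.exp_pos (-q)]
    _ = _ := by rw [mul_add, ← Real.exp_add, ← Real.exp_add]; ring_nf

section SquaredLoss

variable {F : Type*} [NormedAddCommGroup F] [InnerProductSpace ℝ F]

noncomputable def sqLoss (x : F) (y : ℝ) (θ : F) : ℝ := 1 / 2 * (⟪θ, x⟫ - y) ^ 2

@[fun_prop]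
theorem continuous_sqLoss (x : F) (y : ℝ) : Continuous (sqLoss x y) := by
  unfold sqLoss; fun_prop

theorem sqLoss_add_sub (x : F) (y : ℝ) (θ u : F) :
    sqLoss x y (θ + u) - sqLoss x y θ = 1 / 2 * ⟪u, x⟫ ^ 2 + (⟪θ, x⟫ - y) * ⟪u, x⟫ := by
  simp only [sqLoss, inner_add_left]; ring

theorem sqLoss_sub_sub (x : F) (y : ℝ) (θ u : F) :
    sqLoss x y (θ - u) - sqLoss x y θ = 1 / 2 * ⟪u, x⟫ ^ 2 - (⟪θ, x⟫ - y) * ⟪u, x⟫ := by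
  simp only [sqLoss, inner_sub_left]; ring

theorem two_mul_exp_neg_le_exp_sum_sqLoss {ι : Type*} (S : Finset ι) (X : ι → F) (Y : ι → ℝ)
    (hX : ∀ s ∈ S, ‖X s‖ ≤ 1) (θ : F) {u : F} {δ : ℝ} (hu : ‖u‖ ≤ δ) :
    2 * Real.exp (-(#S * δ ^ 2 / 2)) ≤
      Real.exp (-∑ s ∈ S, (sqLoss (X s) (Y s) (θ + u) - sqLoss (X s) (Y s) θ)) +
      Real.exp (-∑ s ∈ S, (sqLoss (X s) (Y s) (θ - u) - sqLoss (X s) (Y s) θ)) := by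
  have hquad : ∑ s ∈ S, 1 / 2 * ⟪u, X s⟫ ^ 2 ≤ #S * δ ^ 2 / 2 := by
    calc ∑ s ∈ S, 1 / 2 * ⟪u, X s⟫ ^ 2 ≤ ∑ s ∈ S, δ ^ 2 / 2 := by
          refine sum_le_sum fun s hs => ?_
          have : |⟪u, X s⟫| ≤ δ := (abs_real_inner_le_norm u (X s)).trans
            (by nlinarith [norm_nonneg u, norm_nonneg (X s), hX s hs])
          nlinarith [sq_abs ⟪u, X s⟫, abs_nonneg ⟪u, X s⟫]
      _ = #S * δ ^ 2 / 2 := by rw [sum_const, nsmul_eq_mul]; ring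
  simp only [sqLoss_add_sub, sqLoss_sub_sub, sum_add_distrib, sum_sub_distrib]
  calc 2 * Real.exp (-(#S * δ ^ 2 / 2)) ≤ 2 * Real.exp (-∑ s ∈ S, 1 / 2 * ⟪u, X s⟫ ^ 2) := by
        gcongr
    _ ≤ _ := two_mul_exp_neg_le_exp_add_exp _ _

end SquaredLoss

theorem neg_log_mul_exp_eq (p : ℕ) {M R : ℝ} (hp : 0 < p) (hM : 0 < M) (hR : 0 < R) :
    -Real.log ((√(p / M) / R) ^ p * Real.exp (-(p / 2))) =
      (p / 2) * Real.log (R ^ 2 * Real.exp 1 * M / p) := by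
  have hp' : (0 : ℝ) < p := by exact_mod_cast hp
  have hδ : 0 < √(p / M) := Real.sqrt_pos.mpr (by positivity)
  have harg : R ^ 2 * Real.exp 1 * M / p = ((√(p / M) / R) ^ 2)⁻¹ * Real.exp 1 := by
    rw [div_pow, Real.sq_sqrt (by positivity)]
    field_simp
  rw [harg, Real.log_mul (by positivity) (Real.exp_ne_zero _), Real.log_mul (by positivity)
    (Real.exp_ne_zero _), Real.log_inv, Real.log_exp, Real.log_exp, Real.log_pow, Real.log_pow]
  push_cast
  ring

theorem ewa_uniform_prior_regret_bound_general
    (p t : ℕ) (hp : 1 ≤ p) (B : ℝ)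
    (X : ℕ → EuclideanSpace ℝ (Fin p)) (hX : ∀ s ∈ Finset.Icc 1 t, ‖X s‖ ≤ 1)
    (Y : ℕ → ℝ)
    (ℓ : ℕ → EuclideanSpace ℝ (Fin p) → ℝ)
    (hℓ : ∀ s θ, ℓ s θ = (1/2) * (⟪θ, X s⟫ - Y s)^2)
    (Q₁ : Measure (EuclideanSpace ℝ (Fin p)))
    (hQ₁ : Q₁ = (volume (closedBall (0 : EuclideanSpace ℝ (Fin p)) (B+1)))⁻¹ •
        volume.restrict (closedBall (0 : EuclideanSpace ℝ (Fin p)) (B+1)))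
    (θbar : EuclideanSpace ℝ (Fin p)) (hθbar : ‖θbar‖ ≤ B) :
    -Real.log (∫ θ, Real.exp (-(∑ s ∈ Finset.Icc 1 t, (ℓ s θ - ℓ s θbar))) ∂Q₁)
      ≤ ((p : ℝ)/2) * Real.log ((B+1)^2 * Real.exp 1 * max (p : ℝ) (t : ℝ) / p) := by
  obtain rfl : ℓ = fun s => sqLoss (X s) (Y s) := funext₂ hℓ
  subst hQ₁
  set M := max (p : ℝ) t
  have hM : 0 < M := lt_max_of_lt_left (by exact_mod_cast hp)
  set δ := √(p / M)
  have htδ : t * δ ^ 2 ≤ p := by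
    rw [Real.sq_sqrt (by positivity), mul_div_assoc']
    exact div_le_of_le_mul₀ hM.le (Nat.cast_nonneg _) (by nlinarith [le_max_right (p : ℝ) t])
  have hB : 0 < B + 1 := by linarith [norm_nonneg θbar]
  have hsub : closedBall θbar δ ⊆ closedBall 0 (B + 1) := by
    have hδ : δ ≤ 1 := Real.sqrt_le_one.mpr (div_le_one_of_le₀ (le_max_left _ _) hM.le)
    refine closedBall_subset_closedBall' ?_
    rw [dist_zero_right]
    linarith
  have hsym : ∀ u ∈ closedBall (0 : EuclideanSpace ℝ (Fin p)) δ, 2 * Real.exp (-(p / 2)) ≤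
      Real.exp (-∑ s ∈ Icc 1 t, (sqLoss (X s) (Y s) (θbar + u) - sqLoss (X s) (Y s) θbar)) +
      Real.exp (-∑ s ∈ Icc 1 t, (sqLoss (X s) (Y s) (θbar - u) - sqLoss (X s) (Y s) θbar)) := by
    intro u hu
    refine le_trans ?_
      (two_mul_exp_neg_le_exp_sum_sqLoss _ X Y hX θbar (mem_closedBall_zero_iff.mp hu))
    rw [Nat.card_Icc, Nat.add_sub_cancel]
    gcongr
  have hlower := mul_le_integral_uniform_closedBall volume
    (f := fun θ => Real.exp (-∑ s ∈ Icc 1 t, (sqLoss (X s) (Y s) θ - sqLoss (X s) (Y s) θbar)))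
    (by fun_prop) (fun _ => (Real.exp_pos _).le) (Real.sqrt_nonneg _) hB hsub hsym
  rw [finrank_euclideanSpace_fin] at hlower
  rw [← neg_log_mul_exp_eq p hp hM hB]
  exact neg_le_neg (Real.log_le_log (by positivity) hlower)

theorem ewa_uniform_prior_regret_bound
    (p t : ℕ) (hp : 1 ≤ p) (ht : 1 ≤ t) (B : ℝ) (hB : 0 < B)
    (X : ℕ → EuclideanSpace ℝ (Fin p)) (hX : ∀ s ∈ Finset.Icc 1 t, ‖X s‖ ≤ 1)
    (Y : ℕ → ℝ)
    (ℓ : ℕ → EuclideanSpace ℝ (Fin p) → ℝ)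
    (hℓ : ∀ s θ, ℓ s θ = (1/2) * (⟪θ, X s⟫ - Y s)^2)
    (Q₁ : Measure (EuclideanSpace ℝ (Fin p)))
    (hQ₁ : Q₁ = (volume (closedBall (0 : EuclideanSpace ℝ (Fin p)) (B+1)))⁻¹ •
        volume.restrict (closedBall (0 : EuclideanSpace ℝ (Fin p)) (B+1)))
    (θbar : EuclideanSpace ℝ (Fin p)) (hθbar : ‖θbar‖ ≤ B) :
    -Real.log (∫ θ, Real.exp (-(∑ s ∈ Finset.Icc 1 t, (ℓ s θ - ℓ s θbar))) ∂Q₁)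
      ≤ ((p : ℝ)/2) * Real.log ((B+1)^2 * Real.exp 1 * max (p : ℝ) (t : ℝ) / p) :=
  ewa_uniform_prior_regret_bound_general p t hp B X hX Y ℓ hℓ Q₁ hQ₁ θbar hθbar
end

section
/- Let p ≥ 1, d ≥ 1, λ > 0, and let (X_t)_{t≥1} be vectors in ℝ^p with ‖X_t‖₂ ≤ 1 for all t. Let V_s = ∑_{r=1}^s X_r X_rᵀ + λ·Id. Then for all T ≥ d+1, ∑_{t=d+1}^T min(1, ‖X_t‖²_{V_{t−d}^{-1}}) ≤ 2dp·log(1 + T/(λdp)). -/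
/-!
Split the rounds `d+1, …, T` into the `d` residue classes modulo `d`. Two rounds of one class are
at least `d` apart, so for `t` in a class the delayed matrix `V_{t-d}` dominates, in the Loewner
order, the class's own undelayed design matrix `λI + ∑ X_s X_sᵀ` (over earlier `s` of the class),
and `A ↦ xᵀA⁻¹x` is antitone. Each class thus obeys the ordinary elliptical potential lemma:
`min(1, u) ≤ 2 log(1 + u)`, the matrix determinant lemma telescopes `∑ log(1 + xᵀA⁻¹x)` into
`log det`, and AM–GM on the eigenvalues bounds `det` by `(tr / p)^p`. A class has at most `T/d`
rounds.
-/

open Matrix Finset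
open scoped MatrixOrder

theorem Real.sum_log_le_card_mul_log_mean {ι : Type*} (s : Finset ι) {z : ι → ℝ}
    (hz : ∀ i ∈ s, 0 < z i) : ∑ i ∈ s, log (z i) ≤ #s * log ((∑ i ∈ s, z i) / #s) := by
  rcases s.eq_empty_or_nonempty with rfl | hs
  · simp
  have hcard : (0 : ℝ) < #s := by exact_mod_cast hs.card_pos
  have := strictConcaveOn_log_Ioi.concaveOn.le_map_sum (t := s) (w := fun _ => (#s : ℝ)⁻¹)
    (p := z) (fun _ _ => by positivity) (by simp [hcard.ne']) hz
  simp only [smul_eq_mul, inv_mul_eq_div, ← sum_div] at this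
  exact (div_le_iff₀' hcard).mp this

theorem Real.min_one_le_two_mul_log_one_add {u : ℝ} (hu : 0 ≤ u) :
    min 1 u ≤ 2 * log (1 + u) := by
  have hpos : 0 < 1 + u := by linarith
  have hmin : min 1 u ≤ 2 * (1 - (1 + u)⁻¹) := by
    have : (1 + u)⁻¹ * (1 + u) = 1 := inv_mul_cancel₀ hpos.ne'
    rcases le_total u 1 with h | h <;> simp only [h, min_eq_left, min_eq_right] <;>
      nlinarith [inv_pos.mpr hpos]
  linarith [one_sub_inv_le_log_of_pos hpos]

namespace Matrix

variable {n : Type*} [Fintype n] [DecidableEq n]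

theorem det_add_vecMulVec {α : Type*} [CommRing α] {A : Matrix n n α} (hA : IsUnit A.det)
    (u v : n → α) : (A + vecMulVec u v).det = A.det * (1 + v ⬝ᵥ A⁻¹ *ᵥ u) := by
  rw [vecMulVec_eq Unit, det_add_replicateCol_mul_replicateRow hA, det_unique (n := Unit)]
  simp [mul_apply, dotProduct, mulVec, Finset.mul_sum, Finset.sum_mul, mul_assoc]
  rw [Finset.sum_comm]

theorem PosDef.dotProduct_inv_mulVec_le {A B : Matrix n n ℝ} (hA : A.PosDef) (hAB : A ≤ B)
    (x : n → ℝ) : x ⬝ᵥ B⁻¹ *ᵥ x ≤ x ⬝ᵥ A⁻¹ *ᵥ x := by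
  have hB : B.PosDef := by simpa using hA.add_posSemidef (le_iff.mp hAB)
  set y := B⁻¹ *ᵥ x
  set z := A⁻¹ *ᵥ x
  have hBy : B *ᵥ y = x := by
    simp [y, mulVec_mulVec, mul_nonsing_inv _ ((isUnit_iff_isUnit_det B).mp hB.isUnit)]
  have hAz : A *ᵥ z = x := by
    simp [z, mulVec_mulVec, mul_nonsing_inv _ ((isUnit_iff_isUnit_det A).mp hA.isUnit)]
  have hAsymm : z ⬝ᵥ A *ᵥ y = x ⬝ᵥ y := by
    rw [dotProduct_mulVec, ← mulVec_transpose, (isHermitian_iff_isSymm.mp hA.isHermitian).eq,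
      hAz]
  have hyy : y ⬝ᵥ A *ᵥ y ≤ x ⬝ᵥ y := by
    have := (le_iff.mp hAB).dotProduct_mulVec_nonneg y
    simp only [star_trivial, sub_mulVec, dotProduct_sub, hBy] at this
    rw [dotProduct_comm] at this
    linarith
  have hyz := hA.posSemidef.dotProduct_mulVec_nonneg (y - z)
  simp only [star_trivial, mulVec_sub, dotProduct_sub, sub_dotProduct, hAz, hAsymm] at hyz
  rw [dotProduct_comm y x, dotProduct_comm z x] at hyz
  linarith

theorem PosDef.dotProduct_inv_mulVec_nonneg {A : Matrix n n ℝ} (hA : A.PosDef) (x : n → ℝ) :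
    0 ≤ x ⬝ᵥ A⁻¹ *ᵥ x := by
  simpa using hA.inv.posSemidef.dotProduct_mulVec_nonneg x

theorem PosDef.log_det_le {A : Matrix n n ℝ} (hA : A.PosDef) :
    Real.log A.det ≤ Fintype.card n * Real.log (A.trace / Fintype.card n) := by
  rw [hA.isHermitian.det_eq_prod_eigenvalues, hA.isHermitian.trace_eq_sum_eigenvalues]
  simp only [RCLike.ofReal_real_eq_id, id]
  rw [Real.log_prod fun i _ => (hA.eigenvalues_pos i).ne']
  simpa using Real.sum_log_le_card_mul_log_mean univ fun i _ => hA.eigenvalues_pos i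

end Matrix

section DesignMatrix

variable {ι n : Type*} [DecidableEq n]

noncomputable def designMatrix (lam : ℝ) (x : ι → n → ℝ) (s : Finset ι) : Matrix n n ℝ :=
  ∑ t ∈ s, vecMulVec (x t) (x t) + lam • 1

variable {lam : ℝ} {x : ι → n → ℝ}

theorem designMatrix_empty : designMatrix lam x ∅ = lam • 1 := by simp [designMatrix]

theorem designMatrix_insert [DecidableEq ι] {a : ι} {s : Finset ι} (ha : a ∉ s) :
    designMatrix lam x (insert a s) = designMatrix lam x s + vecMulVec (x a) (x a) := by
  simp only [designMatrix, sum_insert ha]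
  abel

variable [Fintype n]

omit [DecidableEq n] in
theorem posSemidef_sum_vecMulVec_self (s : Finset ι) :
    (∑ t ∈ s, vecMulVec (x t) (x t)).PosSemidef :=
  posSemidef_sum s fun t _ => by simpa using posSemidef_vecMulVec_self_star (x t)

theorem designMatrix_posDef (hlam : 0 < lam) (s : Finset ι) : (designMatrix lam x s).PosDef :=
  PosDef.posSemidef_add (posSemidef_sum_vecMulVec_self s) (PosDef.one.smul hlam)

theorem designMatrix_mono [DecidableEq ι] {s s' : Finset ι} (h : s ⊆ s') :
    designMatrix lam x s ≤ designMatrix lam x s' := by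
  rw [le_iff, designMatrix, designMatrix, ← sum_sdiff h]
  simpa using posSemidef_sum_vecMulVec_self (s' \ s)

theorem trace_designMatrix (s : Finset ι) :
    (designMatrix lam x s).trace = ∑ t ∈ s, x t ⬝ᵥ x t + lam * Fintype.card n := by
  simp [designMatrix, trace_sum, trace_vecMulVec]

end DesignMatrix

section EllipticalPotential

variable {ι n : Type*} [LinearOrder ι] [Fintype n] [DecidableEq n] {lam : ℝ} {x : ι → n → ℝ}

theorem sum_log_one_add_eq_log_det (hlam : 0 < lam) (s : Finset ι) :
    ∑ t ∈ s, Real.log (1 + x t ⬝ᵥ (designMatrix lam x {u ∈ s | u < t})⁻¹ *ᵥ x t) =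
      Real.log (designMatrix lam x s).det - Fintype.card n * Real.log lam := by
  induction s using Finset.induction_on_max with
  | empty => simp [designMatrix_empty, Real.log_pow]
  | insert a s hlt ih =>
    have ha : a ∉ s := fun h => lt_irrefl a (hlt a h)
    have hA := designMatrix_posDef hlam s (x := x)
    have hbefore_a : {u ∈ insert a s | u < a} = s := by
      ext u
      simp only [mem_filter, mem_insert]
      exact ⟨fun ⟨h, hu⟩ => h.resolve_left hu.ne, fun hu => ⟨Or.inr hu, hlt u hu⟩⟩
    have hbefore : ∀ t ∈ s, {u ∈ insert a s | u < t} = {u ∈ s | u < t} := fun t ht => by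
      rw [filter_insert, if_neg (hlt t ht).not_gt]
    rw [sum_insert ha, sum_congr rfl fun t ht => by rw [hbefore t ht], ih, hbefore_a,
      designMatrix_insert ha, det_add_vecMulVec ((isUnit_iff_isUnit_det _).mp hA.isUnit),
      Real.log_mul hA.det_pos.ne' (by linarith [hA.dotProduct_inv_mulVec_nonneg (x a)])]
    ring

theorem sum_log_one_add_le (hlam : 0 < lam) {s : Finset ι} (hx : ∀ t ∈ s, x t ⬝ᵥ x t ≤ 1) :
    ∑ t ∈ s, Real.log (1 + x t ⬝ᵥ (designMatrix lam x {u ∈ s | u < t})⁻¹ *ᵥ x t) ≤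
      Fintype.card n * Real.log (1 + #s / (lam * Fintype.card n)) := by
  rw [sum_log_one_add_eq_log_det hlam]
  rcases (Fintype.card n).eq_zero_or_pos with hp | hp
  · have : IsEmpty n := Fintype.card_eq_zero_iff.mp hp
    simp
  have : Nonempty n := Fintype.card_pos_iff.mp hp
  set p : ℝ := (Fintype.card n : ℝ)
  have hp' : (0 : ℝ) < p := by positivity
  have hA := designMatrix_posDef hlam s (x := x)
  have htr : (designMatrix lam x s).trace / p ≤ lam * (1 + #s / (lam * p)) := by
    rw [trace_designMatrix, div_le_iff₀ hp']
    have : ∑ t ∈ s, x t ⬝ᵥ x t ≤ #s := by simpa using sum_le_sum hx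
    field_simp
    linarith
  calc Real.log (designMatrix lam x s).det - p * Real.log lam
      ≤ p * Real.log ((designMatrix lam x s).trace / p) - p * Real.log lam := by
        linarith [hA.log_det_le]
    _ ≤ p * Real.log (lam * (1 + #s / (lam * p))) - p * Real.log lam := by
        gcongr
        exact div_pos hA.trace_pos hp'
    _ = p * Real.log (1 + #s / (lam * p)) := by
        rw [Real.log_mul hlam.ne' (by positivity)]
        ring

theorem sum_min_one_le_of_designMatrix_le (hlam : 0 < lam) {s : Finset ι}
    (hx : ∀ t ∈ s, x t ⬝ᵥ x t ≤ 1) (W : ι → Matrix n n ℝ)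
    (hW : ∀ t ∈ s, designMatrix lam x {u ∈ s | u < t} ≤ W t) :
    ∑ t ∈ s, min 1 (x t ⬝ᵥ (W t)⁻¹ *ᵥ x t) ≤
      2 * (Fintype.card n * Real.log (1 + #s / (lam * Fintype.card n))) := by
  calc ∑ t ∈ s, min 1 (x t ⬝ᵥ (W t)⁻¹ *ᵥ x t)
      ≤ ∑ t ∈ s, 2 * Real.log (1 + x t ⬝ᵥ (designMatrix lam x {u ∈ s | u < t})⁻¹ *ᵥ x t) := by
        refine sum_le_sum fun t ht => ?_
        have hA := designMatrix_posDef hlam {u ∈ s | u < t} (x := x)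
        exact (min_le_min_left 1 (hA.dotProduct_inv_mulVec_le (hW t ht) (x t))).trans
          (Real.min_one_le_two_mul_log_one_add (hA.dotProduct_inv_mulVec_nonneg (x t)))
    _ ≤ _ := by
        rw [← mul_sum]
        gcongr
        exact sum_log_one_add_le hlam hx

end EllipticalPotential

theorem card_Icc_filter_mod_eq_le_div {d : ℕ} (hd : 0 < d) (T j : ℕ) :
    #{t ∈ Icc (d + 1) T | t % d = j} ≤ T / d := by
  calc #{t ∈ Icc (d + 1) T | t % d = j} ≤ #(Icc 1 (T / d)) := by
        refine card_le_card_of_injOn (· / d) (fun t ht => ?_) fun t ht t' ht' h => ?_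
        · simp only [coe_filter, Set.mem_ofPred_eq, mem_Icc] at ht
          simp only [coe_Icc, Set.mem_Icc]
          exact ⟨(Nat.one_le_div_iff hd).mpr (by omega), Nat.div_le_div_right ht.1.2⟩
        · simp only [coe_filter, Set.mem_ofPred_eq] at ht ht'
          rw [← Nat.div_add_mod t d, ← Nat.div_add_mod t' d, ht.2, ht'.2]
          simp_all
    _ = T / d := by simp

theorem delayed_elliptical_potential_general
    (p d : ℕ) (hd : 1 ≤ d)
    (lam : ℝ) (hlam : 0 < lam)
    (X : ℕ → Fin p → ℝ) (hX : ∀ t, 1 ≤ t → Real.sqrt (∑ i, X t i ^ 2) ≤ 1)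
    (V : ℕ → Matrix (Fin p) (Fin p) ℝ)
    (hV : ∀ s, V s = (∑ r ∈ Finset.Icc 1 s, Matrix.vecMulVec (X r) (X r))
        + lam • (1 : Matrix (Fin p) (Fin p) ℝ))
    (T : ℕ) :
    ∑ t ∈ Finset.Icc (d+1) T, min 1 (X t ⬝ᵥ (V (t - d))⁻¹.mulVec (X t))
      ≤ 2 * d * p * Real.log (1 + T / (lam * d * p)) := by
  rw [← sum_fiberwise_of_maps_to (t := range d) (g := (· % d))
    fun t _ => mem_range.mpr (t.mod_lt hd)]
  calc _ ≤ ∑ _j ∈ range d, 2 * (p * Real.log (1 + T / (lam * d * p))) :=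
        sum_le_sum fun j _ => ?_
    _ = _ := by rw [sum_const, card_range, nsmul_eq_mul]; ring
  set B := {t ∈ Icc (d + 1) T | t % d = j}
  have hunit : ∀ t ∈ B, X t ⬝ᵥ X t ≤ 1 := fun t ht => by
    have := Real.sqrt_le_one.mp (hX t (by simp [B] at ht; omega))
    simpa [dotProduct, sq] using this
  have hdelay : ∀ t ∈ B, designMatrix lam X {u ∈ B | u < t} ≤ V (t - d) := fun t ht => by
    rw [hV]
    refine designMatrix_mono fun u hu => ?_
    simp only [B, mem_filter, mem_Icc] at ht hu
    have := Nat.ModEq.add_le_of_lt (hu.1.2.trans ht.2.symm) hu.2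
    simp only [mem_Icc]
    omega
  have hcard : (#B : ℝ) ≤ T / d :=
    (Nat.cast_le.mpr (card_Icc_filter_mod_eq_le_div hd T j)).trans Nat.cast_div_le
  calc _ ≤ 2 * (p * Real.log (1 + #B / (lam * p))) := by
        simpa using sum_min_one_le_of_designMatrix_le hlam hunit (fun t => V (t - d)) hdelay
    _ ≤ 2 * (p * Real.log (1 + T / (lam * d * p))) := by
        gcongr 2 * (_ * Real.log (1 + ?_))
        calc (#B : ℝ) / (lam * p) ≤ T / d / (lam * p) := by gcongr
          _ = T / (lam * d * p) := by ring

theorem delayed_elliptical_potential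
    (p d : ℕ) (hp : 1 ≤ p) (hd : 1 ≤ d)
    (lam : ℝ) (hlam : 0 < lam)
    (X : ℕ → Fin p → ℝ) (hX : ∀ t, 1 ≤ t → Real.sqrt (∑ i, X t i ^ 2) ≤ 1)
    (V : ℕ → Matrix (Fin p) (Fin p) ℝ)
    (hV : ∀ s, V s = (∑ r ∈ Finset.Icc 1 s, Matrix.vecMulVec (X r) (X r))
        + lam • (1 : Matrix (Fin p) (Fin p) ℝ))
    (T : ℕ) (hT : d + 1 ≤ T) :
    ∑ t ∈ Finset.Icc (d+1) T, min 1 (X t ⬝ᵥ (V (t - d))⁻¹.mulVec (X t))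
      ≤ 2 * d * p * Real.log (1 + T / (lam * d * p)) :=
  delayed_elliptical_potential_general p d hd lam hlam X hX V hV T
end
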